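/- The amplitude damping channel with Kraus operators K₁ = diag(1, √(1−p)), K₂ = [[0, √p],[0, 0]] is selfcomplementary if and only if p = 1/2; in that case it coincides (up to a relabeling) with the θ = π/2, φ = 0 member of the family K₁ = diag(sinθ, 1/√2), K₂ = [[0,1/√2],[cosθ e^{iφ},0]] (second family form K₁ = diag(1, 1/√2), K₂ = [[0,1/√2],[0,0]]). -/

import Mathlib

open Matrix

noncomputable section

/-- Amplitude damping Kraus operator `K₁ = diag(1, √(1−p))`. -/
def AD1 (p : ℝ) : Matrix (Fin 2) (Fin 2) ℂ :=
  !![1, 0; 0, (Real.sqrt (1 - p) : ℂ)]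

/-- Amplitude damping Kraus operator `K₂ = [[0, √p],[0, 0]]`. -/
def AD2 (p : ℝ) : Matrix (Fin 2) (Fin 2) ℂ :=
  !![0, (Real.sqrt p : ℂ); 0, 0]

/-- Selfcomplementarity of a two-Kraus qubit family: the index symmetry
`K^i_{αj} = K^α_{ij}`, where `K 0 = K₁`, `K 1 = K₂`. -/
def SelfComp (K1 K2 : Matrix (Fin 2) (Fin 2) ℂ) : Prop :=
  ∀ (i α j : Fin 2),
    (if i = 0 then K1 else K2) α j = (if α = 0 then K1 else K2) i j

theorem selfComp_iff_row_eq {K1 K2 : Matrix (Fin 2) (Fin 2) ℂ} :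
    SelfComp K1 K2 ↔ K1 1 = K2 0 := by
  refine ⟨fun h => funext fun j => h 0 1 j, fun h i α j => ?_⟩
  fin_cases i <;> fin_cases α <;> simp [h]

theorem Real.sqrt_one_sub_eq_sqrt_iff {x : ℝ} : √(1 - x) = √x ↔ x = 1 / 2 := by
  refine ⟨fun h => ?_, fun hx => by rw [hx]; norm_num⟩
  rcases lt_trichotomy x (1 / 2) with hlt | heq | hgt
  · have : √x < √(1 - x) := (Real.sqrt_lt_sqrt_iff_of_pos (by linarith)).2 (by linarith)
    exact absurd h this.ne'
  · exact heq
  · have : √(1 - x) < √x := (Real.sqrt_lt_sqrt_iff_of_pos (by linarith)).2 (by linarith)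
    exact absurd h this.ne

theorem selfComp_AD_iff (p : ℝ) : SelfComp (AD1 p) (AD2 p) ↔ √(1 - p) = √p := by
  simp [selfComp_iff_row_eq, AD1, AD2, funext_iff, Fin.forall_fin_two]

theorem amplitude_damping_selfcomplementary (p : ℝ) :
    (SelfComp (AD1 p) (AD2 p) ↔ p = 1 / 2) ∧
    (p = 1 / 2 →
      AD1 p = !![1, 0; 0, (((Real.sqrt 2)⁻¹ : ℝ) : ℂ)] ∧
      AD2 p = !![0, (((Real.sqrt 2)⁻¹ : ℝ) : ℂ); 0, 0]) := by
  refine ⟨(selfComp_AD_iff p).trans Real.sqrt_one_sub_eq_sqrt_iff, ?_⟩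
  rintro rfl
  norm_num [AD1, AD2, Real.sqrt_inv]

end
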